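/- arXiv:2412.02665 — 3 statements merged into one kernel-verified Lean document; each statement's English description precedes it below -/
import Mathlib

section
/- For the network SIS dynamics with inputs, dx/dt = (-Γ + B - diag(x)B)x + (C - diag(x)C)u, with output y = x, the storage function V(x) = (1/2)‖x‖² satisfies the dissipation inequality ∇V(x)ᵀ f(x,u) ≤ S(u,y) where S(u,y) = yᵀCu + yᵀ(-Γ+B)y, for all x ∈ [0,1]ⁿ, u ∈ [0,1]ᵖ, provided B and C are entrywise nonnegative matrices. -/
open Matrix

/-- Dissipation inequality for the network SIS model with inputs:
`∇V(x)ᵀ f(x,u) ≤ S(u,y)` with `V(x) = ½‖x‖²`, `y = x`. -/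
theorem sis_dissipativity
    (n p : ℕ) (g : Fin n → ℝ) (hg : ∀ i, 0 ≤ g i)
    (B : Matrix (Fin n) (Fin n) ℝ) (hB : ∀ i j, 0 ≤ B i j)
    (C : Matrix (Fin n) (Fin p) ℝ) (hC : ∀ i j, 0 ≤ C i j)
    (x : Fin n → ℝ) (hx : ∀ i, x i ∈ Set.Icc (0:ℝ) 1)
    (u : Fin p → ℝ) (hu : ∀ j, u j ∈ Set.Icc (0:ℝ) 1) :
    x ⬝ᵥ ((-(Matrix.diagonal g) + B - Matrix.diagonal x * B).mulVec x
        + (C - Matrix.diagonal x * C).mulVec u)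
      ≤ x ⬝ᵥ C.mulVec u + x ⬝ᵥ (-(Matrix.diagonal g) + B).mulVec x := by
  have hBx : 0 ≤ x ⬝ᵥ (Matrix.diagonal x * B).mulVec x := by
    apply Finset.sum_nonneg
    intro i _
    rw [Matrix.mulVec, dotProduct]
    apply mul_nonneg (hx i).1
    apply Finset.sum_nonneg
    intro j _
    simp only [Matrix.mul_apply, Matrix.diagonal_apply]
    apply mul_nonneg _ (hx j).1
    apply Finset.sum_nonneg
    intro k _
    by_cases h : i = k <;> simp [h]
    exact mul_nonneg (hx k).1 (hB k j)
  have hCu : 0 ≤ x ⬝ᵥ (Matrix.diagonal x * C).mulVec u := by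
    apply Finset.sum_nonneg
    intro i _
    rw [Matrix.mulVec, dotProduct]
    apply mul_nonneg (hx i).1
    apply Finset.sum_nonneg
    intro j _
    simp only [Matrix.mul_apply, Matrix.diagonal_apply]
    apply mul_nonneg _ (hu j).1
    apply Finset.sum_nonneg
    intro k _
    by_cases h : i = k <;> simp [h]
    exact mul_nonneg (hx k).1 (hC k j)
  simp only [Matrix.sub_mulVec, dotProduct_add, dotProduct_sub]
  linarith
end

section
/- Let M = Λ + N where Λ is a negative diagonal matrix and N is an irreducible nonnegative matrix. Then the spectral abscissa of M is negative if and only if the spectral radius of -Λ⁻¹N is less than 1. -/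
open Matrix

/-- The spectral abscissa of a real matrix. -/
noncomputable def spectralAbscissa {ι : Type*} [Fintype ι] [DecidableEq ι]
    (A : Matrix ι ι ℝ) : ℝ :=
  sSup (Complex.re '' spectrum ℂ (A.map (Complex.ofReal)))

/-- The spectral radius of a real matrix. -/
noncomputable def spectralRadius' {ι : Type*} [Fintype ι] [DecidableEq ι]
    (A : Matrix ι ι ℝ) : ℝ :=
  sSup ((fun z : ℂ => ‖z‖) '' spectrum ℂ (A.map (Complex.ofReal)))

/-- A matrix is irreducible if its associated directed graph is strongly connected. -/
def IsIrreducibleMatrix {ι : Type*} (A : Matrix ι ι ℝ) : Prop :=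
  ∀ S : Set ι, S.Nonempty → S ≠ Set.univ → ∃ i ∉ S, ∃ j ∈ S, A i j ≠ 0

/-!
Write `B = -Λ⁻¹N` and `M = Λ + N`. If `Mv = μv` with `Re μ ≥ 0`, then `|v| ≤ B|v|` entrywise
(because `|μ - λᵢ| ≥ -λᵢ`), and the Collatz–Wielandt bound, a consequence of Gelfand's formula,
gives `ρ(B) ≥ 1`. Conversely, the Perron–Frobenius theorem applied to the irreducible nonnegative
matrix `M + cI` yields a positive eigenvector `y` of `M` with a real eigenvalue `s ≤ σ(M) < 0`;
then `By < y` entrywise, and comparing any eigenvector of `B` with `y` gives `ρ(B) < 1`.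
-/

open Filter

theorem IsIrreducibleMatrix.of_offDiag_eq {ι : Type*} {A B : Matrix ι ι ℝ}
    (hA : IsIrreducibleMatrix A) (h : ∀ i j, i ≠ j → A i j = B i j) : IsIrreducibleMatrix B :=
  fun S hS hSu => by
    obtain ⟨i, hi, j, hj, hij⟩ := hA S hS hSu
    exact ⟨i, hi, j, hj, h i j (fun hij => hi (hij ▸ hj)) ▸ hij⟩

theorem exists_pos_of_nonneg_of_ne_zero {ι : Type*} {x : ι → ℝ} (hx : 0 ≤ x) (hx0 : x ≠ 0) :
    ∃ i, 0 < x i :=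
  (Pi.lt_def.mp (lt_of_le_of_ne hx (Ne.symm hx0))).2

namespace Matrix

variable {ι : Type*} [Fintype ι]

section Spectrum

variable [DecidableEq ι]

theorem mem_spectrum_iff_exists_mulVec_eq_smul {K : Type*} [Field K] {A : Matrix ι ι K}
    {μ : K} : μ ∈ spectrum K A ↔ ∃ v ≠ 0, A *ᵥ v = μ • v := by
  rw [← spectrum_toLin', ← Module.End.hasEigenvalue_iff_mem_spectrum]
  refine ⟨fun h => ?_, fun ⟨v, hv0, hv⟩ => ?_⟩
  · obtain ⟨v, hv⟩ := h.exists_hasEigenvector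
    exact ⟨v, hv.2, by simpa using hv.apply_eq_smul⟩
  · exact Module.End.hasEigenvalue_of_hasEigenvector
      ⟨Module.End.mem_eigenspace_iff.mpr (by simpa using hv), hv0⟩

theorem ofReal_mem_spectrum_map_of_mulVec_eq_smul {A : Matrix ι ι ℝ} {r : ℝ} {x : ι → ℝ}
    (hx : x ≠ 0) (h : A *ᵥ x = r • x) : (r : ℂ) ∈ spectrum ℂ (A.map Complex.ofReal) := by
  refine mem_spectrum_iff_exists_mulVec_eq_smul.mpr ⟨fun i => x i, fun h0 => hx ?_, ?_⟩
  · ext i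
    simpa using congrFun h0 i
  · ext i
    simp only [mulVec, dotProduct, map_apply, Pi.smul_apply, smul_eq_mul]
    exact_mod_cast congrFun h i

theorem re_le_spectralAbscissa {A : Matrix ι ι ℝ} {μ : ℂ}
    (hμ : μ ∈ spectrum ℂ (A.map Complex.ofReal)) : μ.re ≤ spectralAbscissa A :=
  le_csSup ((finite_spectrum _).image _).bddAbove ⟨μ, hμ, rfl⟩

theorem norm_le_spectralRadius' {A : Matrix ι ι ℝ} {μ : ℂ}
    (hμ : μ ∈ spectrum ℂ (A.map Complex.ofReal)) : ‖μ‖ ≤ spectralRadius' A :=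
  le_csSup ((finite_spectrum _).image _).bddAbove ⟨μ, hμ, rfl⟩

variable [Nonempty ι]

theorem exists_re_eq_spectralAbscissa (A : Matrix ι ι ℝ) :
    ∃ μ ∈ spectrum ℂ (A.map Complex.ofReal), μ.re = spectralAbscissa A :=
  ((spectrum.nonempty_of_isAlgClosed_of_finiteDimensional ℂ _).image _).csSup_mem
    ((finite_spectrum _).image _)

theorem exists_norm_eq_spectralRadius' (A : Matrix ι ι ℝ) :
    ∃ μ ∈ spectrum ℂ (A.map Complex.ofReal), ‖μ‖ = spectralRadius' A :=
  ((spectrum.nonempty_of_isAlgClosed_of_finiteDimensional ℂ _).image _).csSup_mem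
    ((finite_spectrum _).image _)

end Spectrum

section Nonneg

variable {A : Matrix ι ι ℝ}

theorem mulVec_nonneg (hA : ∀ i j, 0 ≤ A i j) {x : ι → ℝ} (hx : 0 ≤ x) : 0 ≤ A *ᵥ x :=
  fun i => Finset.sum_nonneg fun j _ => mul_nonneg (hA i j) (hx j)

theorem mulVec_mono (hA : ∀ i j, 0 ≤ A i j) {x y : ι → ℝ} (hxy : x ≤ y) : A *ᵥ x ≤ A *ᵥ y :=
  fun i => Finset.sum_le_sum fun j _ => mul_le_mul_of_nonneg_left (hxy j) (hA i j)

theorem mul_le_mulVec (hA : ∀ i j, 0 ≤ A i j) {x : ι → ℝ} (hx : 0 ≤ x) (i j : ι) :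
    A i j * x j ≤ (A *ᵥ x) i :=
  Finset.single_le_sum (f := fun l => A i l * x l) (fun l _ => mul_nonneg (hA i l) (hx l))
    (Finset.mem_univ j)

theorem norm_map_ofReal_mulVec_le (hA : ∀ i j, 0 ≤ A i j) (v : ι → ℂ) (i : ι) :
    ‖(A.map Complex.ofReal *ᵥ v) i‖ ≤ (A *ᵥ fun j => ‖v j‖) i := by
  refine (norm_sum_le _ _).trans (le_of_eq (Finset.sum_congr rfl fun j _ => ?_))
  dsimp only
  rw [map_apply, norm_mul, Complex.norm_real, Real.norm_of_nonneg (hA i j)]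

theorem norm_lt_of_mulVec_lt [DecidableEq ι] (hA : ∀ i j, 0 ≤ A i j) {c : ℝ} {y : ι → ℝ}
    (hy : ∀ i, 0 < y i) (h : ∀ i, (A *ᵥ y) i < c * y i) {μ : ℂ}
    (hμ : μ ∈ spectrum ℂ (A.map Complex.ofReal)) : ‖μ‖ < c := by
  obtain ⟨v, hv0, hv⟩ := mem_spectrum_iff_exists_mulVec_eq_smul.mp hμ
  obtain ⟨j, hj⟩ : ∃ j, v j ≠ 0 := Function.ne_iff.mp hv0
  -- `t • y` is the smallest multiple of `y` dominating `|v|`; it touches `|v|` at `i`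
  obtain ⟨i, -, hi⟩ :=
    Finset.univ.exists_max_image (fun j => ‖v j‖ / y j) ⟨j, Finset.mem_univ j⟩
  set t := ‖v i‖ / y i
  have hvi : ‖v i‖ = t * y i := (div_mul_cancel₀ _ (hy i).ne').symm
  have ht : 0 < t := (div_pos (norm_pos_iff.mpr hj) (hy j)).trans_le (hi j (Finset.mem_univ j))
  have hvt : (fun j => ‖v j‖) ≤ t • y := fun j =>
    (div_le_iff₀ (hy j)).mp (hi j (Finset.mem_univ j))
  have key : ‖μ‖ * ‖v i‖ < c * ‖v i‖ := calc
    ‖μ‖ * ‖v i‖ = ‖(A.map Complex.ofReal *ᵥ v) i‖ := by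
        rw [hv, Pi.smul_apply, smul_eq_mul, norm_mul]
    _ ≤ (A *ᵥ fun j => ‖v j‖) i := norm_map_ofReal_mulVec_le hA v i
    _ ≤ (A *ᵥ (t • y)) i := mulVec_mono hA hvt i
    _ = t * (A *ᵥ y) i := by rw [mulVec_smul, Pi.smul_apply, smul_eq_mul]
    _ < t * (c * y i) := mul_lt_mul_of_pos_left (h i) ht
    _ = c * ‖v i‖ := by rw [hvi]; ring
  exact lt_of_mul_lt_mul_right key (norm_nonneg _)

theorem spectralRadius'_lt_of_mulVec_lt [DecidableEq ι] [Nonempty ι] (hA : ∀ i j, 0 ≤ A i j)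
    {c : ℝ} {y : ι → ℝ} (hy : ∀ i, 0 < y i) (h : ∀ i, (A *ᵥ y) i < c * y i) :
    spectralRadius' A < c := by
  obtain ⟨μ, hμ, hμρ⟩ := exists_norm_eq_spectralRadius' A
  exact hμρ ▸ norm_lt_of_mulVec_lt hA hy h hμ

end Nonneg

section CollatzWielandt

variable [DecidableEq ι] {A : Matrix ι ι ℝ}

theorem smul_pow_le_pow_mulVec (hA : ∀ i j, 0 ≤ A i j) {c : ℝ} (hc : 0 ≤ c) {x : ι → ℝ}
    (h : c • x ≤ A *ᵥ x) (k : ℕ) : c ^ k • x ≤ A ^ k *ᵥ x := by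
  induction k with
  | zero => simp
  | succ k ih =>
    calc c ^ (k + 1) • x = c ^ k • (c • x) := by rw [smul_smul, pow_succ]
      _ ≤ c ^ k • (A *ᵥ x) := smul_le_smul_of_nonneg_left h (pow_nonneg hc k)
      _ = A *ᵥ (c ^ k • x) := (mulVec_smul A _ x).symm
      _ ≤ A *ᵥ (A ^ k *ᵥ x) := mulVec_mono hA ih
      _ = A ^ (k + 1) *ᵥ x := by rw [mulVec_mulVec, pow_succ']

attribute [local instance] Matrix.linftyOpNormedRing Matrix.linftyOpNormedAlgebra

theorem linfty_opNorm_map_ofReal (A : Matrix ι ι ℝ) : ‖A.map Complex.ofReal‖ = ‖A‖ := by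
  simp only [linfty_opNorm_def, map_apply, Complex.nnnorm_real]

theorem pow_le_linfty_opNorm_pow (hA : ∀ i j, 0 ≤ A i j) {c : ℝ} (hc : 0 ≤ c) {x : ι → ℝ}
    (hx : 0 ≤ x) (hx0 : x ≠ 0) (h : c • x ≤ A *ᵥ x) (k : ℕ) : c ^ k ≤ ‖A ^ k‖ := by
  refine le_of_mul_le_mul_right ?_ (norm_pos_iff.mpr hx0)
  calc c ^ k * ‖x‖ = ‖c ^ k • x‖ := by rw [norm_smul, Real.norm_of_nonneg (pow_nonneg hc k)]
    _ ≤ ‖A ^ k *ᵥ x‖ := (pi_norm_le_iff_of_nonneg (norm_nonneg _)).mpr fun i =>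
        (Real.norm_of_nonneg (smul_nonneg (pow_nonneg hc k) hx i)).trans_le
          ((smul_pow_le_pow_mulVec hA hc h k i).trans ((Real.le_norm_self _).trans
            (norm_le_pi_norm _ i)))
    _ ≤ ‖A ^ k‖ * ‖x‖ := linfty_opNorm_mulVec _ _

theorem le_spectralRadius'_of_smul_le_mulVec (hA : ∀ i j, 0 ≤ A i j) {c : ℝ} (hc : 0 ≤ c)
    {x : ι → ℝ} (hx : 0 ≤ x) (hx0 : x ≠ 0) (h : c • x ≤ A *ᵥ x) : c ≤ spectralRadius' A := by
  have : Nonempty ι := by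
    contrapose! hx0
    exact Subsingleton.elim _ _
  have hρ : ENNReal.ofReal c ≤ spectralRadius ℂ (A.map Complex.ofReal) := by
    refine ge_of_tendsto (spectrum.pow_norm_pow_one_div_tendsto_nhds_spectralRadius _) ?_
    filter_upwards [eventually_ne_atTop 0] with k hk
    refine ENNReal.ofReal_le_ofReal ?_
    rw [show A.map Complex.ofReal ^ k = (A ^ k).map Complex.ofReal from
      (map_pow Complex.ofRealHom.mapMatrix A k).symm, linfty_opNorm_map_ofReal]
    calc c = (c ^ k) ^ (1 / k : ℝ) := by
          rw [← Real.rpow_natCast, ← Real.rpow_mul hc, mul_one_div_cancel (by exact_mod_cast hk),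
            Real.rpow_one]
      _ ≤ ‖A ^ k‖ ^ (1 / k : ℝ) :=
          Real.rpow_le_rpow (pow_nonneg hc k) (pow_le_linfty_opNorm_pow hA hc hx hx0 h k)
            (by positivity)
  obtain ⟨μ, hμ, hμρ⟩ := spectrum.exists_nnnorm_eq_spectralRadius (A.map Complex.ofReal)
  rw [← hμρ, ← ENNReal.ofReal_coe_nnreal, ENNReal.ofReal_le_ofReal_iff (by positivity),
    coe_nnnorm] at hρ
  exact hρ.trans (norm_le_spectralRadius' hμ)

theorem lt_spectralRadius'_of_lt_mulVec [Nonempty ι] (hA : ∀ i j, 0 ≤ A i j) {c : ℝ}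
    (hc : 0 ≤ c) {x : ι → ℝ} (hx : ∀ i, 0 < x i) (h : ∀ i, c * x i < (A *ᵥ x) i) :
    c < spectralRadius' A := by
  obtain ⟨i₀, -, hi₀⟩ := Finset.univ.exists_min_image (fun i => (A *ᵥ x) i / x i)
    Finset.univ_nonempty
  have hc' : c < (A *ᵥ x) i₀ / x i₀ := (lt_div_iff₀ (hx i₀)).mpr (h i₀)
  refine hc'.trans_le (le_spectralRadius'_of_smul_le_mulVec hA (hc.trans hc'.le)
    (fun i => (hx i).le) (fun h0 => (hx i₀).ne' (congrFun h0 i₀)) fun i => ?_)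
  exact (le_div_iff₀ (hx i)).mp (hi₀ i (Finset.mem_univ i))

end CollatzWielandt

section Irreducible

variable {A : Matrix ι ι ℝ}

theorem pos_of_mulVec_eq_smul (hA : ∀ i j, 0 ≤ A i j) (hirr : IsIrreducibleMatrix A)
    {x : ι → ℝ} (hx : 0 ≤ x) (hx0 : x ≠ 0) {c : ℝ} (h : A *ᵥ x = c • x) (i : ι) : 0 < x i := by
  by_contra hi
  obtain ⟨k, hk, j, hj, hkj⟩ := hirr {j | 0 < x j} (exists_pos_of_nonneg_of_ne_zero hx hx0)
    fun hS => hi (hS ▸ Set.mem_univ i : i ∈ {j | 0 < x j})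
  have hxk : x k = 0 := le_antisymm (not_lt.mp hk) (hx k)
  have := mul_le_mulVec hA hx k j
  rw [h, Pi.smul_apply, hxk, smul_zero] at this
  exact this.not_gt (mul_pos ((hA k j).lt_of_ne' hkj) hj)

theorem le_one_add_mulVec [DecidableEq ι] (hA : ∀ i j, 0 ≤ A i j) {x : ι → ℝ} (hx : 0 ≤ x) :
    x ≤ (1 + A) *ᵥ x := by
  rw [add_mulVec, one_mulVec]
  exact le_add_of_nonneg_right (mulVec_nonneg hA hx)

theorem exists_pos_one_add_mulVec_of_not_pos [DecidableEq ι] (hA : ∀ i j, 0 ≤ A i j)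
    (hirr : IsIrreducibleMatrix A) {x : ι → ℝ} (hx : 0 ≤ x) (hpos : ∃ i, 0 < x i)
    (hnpos : ¬ ∀ i, 0 < x i) : ∃ i, ¬ 0 < x i ∧ 0 < ((1 + A) *ᵥ x) i := by
  obtain ⟨i, hi, j, hj, hij⟩ := hirr {j | 0 < x j} hpos
    fun hS => hnpos fun i => (hS ▸ Set.mem_univ i : i ∈ {j | 0 < x j})
  refine ⟨i, hi, ?_⟩
  rw [add_mulVec, one_mulVec, Pi.add_apply]
  exact add_pos_of_nonneg_of_pos (hx i)
    ((mul_pos ((hA i j).lt_of_ne' hij) hj).trans_le (mul_le_mulVec hA hx i j))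

/-- Each application of `1 + A` enlarges the support until it is everything, so
`card ι` applications suffice. -/
theorem pos_one_add_pow_card_mulVec [DecidableEq ι] (hA : ∀ i j, 0 ≤ A i j)
    (hirr : IsIrreducibleMatrix A) {x : ι → ℝ} (hx : 0 ≤ x) (hx0 : x ≠ 0) (i : ι) :
    0 < ((1 + A) ^ Fintype.card ι *ᵥ x) i := by
  have hι : 0 < Fintype.card ι := Fintype.card_pos_iff.mpr ⟨i⟩
  set y : ℕ → ι → ℝ := fun k => (1 + A) ^ k *ᵥ x
  set S : ℕ → Finset ι := fun k => {j | 0 < y k j}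
  have hy_succ (k : ℕ) : y (k + 1) = (1 + A) *ᵥ y k := by
    simp only [y, pow_succ', mulVec_mulVec]
  have hy_nonneg (k : ℕ) : 0 ≤ y k := by
    induction k with
    | zero => simpa [y] using hx
    | succ k ih => exact hy_succ k ▸ ih.trans (le_one_add_mulVec hA ih)
  have hS_mono (k : ℕ) : S k ⊆ S (k + 1) := by
    intro j hj
    simp only [S, Finset.mem_filter, Finset.mem_univ, true_and] at hj ⊢
    exact hj.trans_le (hy_succ k ▸ le_one_add_mulVec hA (hy_nonneg k) j)
  have hS_card (k : ℕ) : min (k + 1) (Fintype.card ι) ≤ (S k).card := by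
    induction k with
    | zero =>
      obtain ⟨j, hj⟩ := exists_pos_of_nonneg_of_ne_zero hx hx0
      exact (min_le_left _ _).trans (Finset.card_pos.mpr ⟨j, by simpa [S, y] using hj⟩)
    | succ k ih =>
      by_cases hfull : ∀ j, 0 < y k j
      · have : S (k + 1) = Finset.univ :=
          Finset.eq_univ_of_forall fun j => hS_mono k (by simp [S, hfull j])
        rw [this, Finset.card_univ]
        exact min_le_right _ _
      · obtain ⟨j₀, hj₀⟩ := (Finset.card_pos (s := S k)).mp (by omega)
        obtain ⟨j, hj, hj'⟩ := exists_pos_one_add_mulVec_of_not_pos hA hirr (hy_nonneg k)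
          ⟨j₀, by simpa [S] using hj₀⟩ hfull
        have := Finset.card_lt_card ((Finset.ssubset_iff_of_subset (hS_mono k)).mpr
          ⟨j, by simpa [S, hy_succ] using hj', by simpa [S] using hj⟩)
        omega
  have hall : S (Fintype.card ι) = Finset.univ :=
    Finset.eq_univ_of_card _ (le_antisymm (Finset.card_le_univ _)
      ((min_eq_right (Nat.le_succ _)).symm.trans_le (hS_card _)))
  simpa [S, y] using Finset.eq_univ_iff_forall.mp hall i

/-- The Perron–Frobenius theorem. -/
theorem exists_pos_mulVec_eq_spectralRadius'_smul [DecidableEq ι] [Nonempty ι]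
    (hA : ∀ i j, 0 ≤ A i j) (hirr : IsIrreducibleMatrix A) :
    ∃ x : ι → ℝ, (∀ i, 0 < x i) ∧ A *ᵥ x = spectralRadius' A • x := by
  obtain ⟨μ, hμ, hμr⟩ := exists_norm_eq_spectralRadius' A
  set r := spectralRadius' A
  obtain ⟨v, hv0, hv⟩ := mem_spectrum_iff_exists_mulVec_eq_smul.mp hμ
  set x : ι → ℝ := fun j => ‖v j‖
  have hx : 0 ≤ x := fun j => norm_nonneg _
  have hx0 : x ≠ 0 := fun h => hv0 (funext fun j => norm_eq_zero.mp (congrFun h j))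
  have hsub : r • x ≤ A *ᵥ x := fun j => by
    calc (r • x) j = ‖(A.map Complex.ofReal *ᵥ v) j‖ := by
          rw [hv]; simp only [Pi.smul_apply, smul_eq_mul, norm_mul, hμr, x]
      _ ≤ (A *ᵥ x) j := norm_map_ofReal_mulVec_le hA v j
  by_cases heq : A *ᵥ x = r • x
  · exact ⟨x, pos_of_mulVec_eq_smul hA hirr hx hx0 heq, heq⟩
  -- `P = (1 + A) ^ card ι` commutes with `A` and makes both `x` and the defect `A x - r x`
  -- positive, so `A (P x) > r (P x)` entrywise, contradicting `r = ρ(A)`.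
  set P := (1 + A) ^ Fintype.card ι
  have hPx := pos_one_add_pow_card_mulVec hA hirr hx hx0
  have hPd := pos_one_add_pow_card_mulVec hA hirr (sub_nonneg.mpr hsub) (sub_ne_zero.mpr heq)
  have hAP : A *ᵥ (P *ᵥ x) = r • (P *ᵥ x) + P *ᵥ (A *ᵥ x - r • x) := by
    have hcomm : A * P = P * A :=
      (((Commute.one_right A).add_right (Commute.refl A)).pow_right _).eq
    rw [mulVec_sub, mulVec_smul, mulVec_mulVec, mulVec_mulVec, hcomm]
    abel
  refine absurd (lt_spectralRadius'_of_lt_mulVec hA (hμr ▸ norm_nonneg μ) hPx fun i => ?_)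
    (lt_irrefl r)
  rw [hAP, Pi.add_apply, Pi.smul_apply, smul_eq_mul]
  exact lt_add_of_pos_right _ (hPd i)

end Irreducible

theorem exists_pos_eigenvector_of_offDiag_nonneg [DecidableEq ι] [Nonempty ι]
    {M : Matrix ι ι ℝ} (hM : ∀ i j, i ≠ j → 0 ≤ M i j) (hirr : IsIrreducibleMatrix M) :
    ∃ s : ℝ, ∃ x : ι → ℝ, (∀ i, 0 < x i) ∧ M *ᵥ x = s • x := by
  set c := ∑ i, |M i i|
  have hA : ∀ i j, 0 ≤ (M + c • 1) i j := by
    intro i j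
    rcases eq_or_ne i j with rfl | hij
    · simp only [add_apply, smul_apply, one_apply_eq, smul_eq_mul, mul_one]
      linarith [neg_abs_le (M i i),
        Finset.single_le_sum (f := fun i => |M i i|) (fun i _ => abs_nonneg _)
          (Finset.mem_univ i)]
    · simpa [one_apply_ne hij] using hM i j hij
  have hirrA : IsIrreducibleMatrix (M + c • 1) :=
    hirr.of_offDiag_eq fun i j hij => by simp [one_apply_ne hij]
  obtain ⟨x, hx, hAx⟩ := exists_pos_mulVec_eq_spectralRadius'_smul hA hirrA
  refine ⟨spectralRadius' (M + c • 1) - c, x, hx, ?_⟩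
  rw [add_mulVec, smul_mulVec, one_mulVec] at hAx
  rw [sub_smul, ← hAx, add_sub_cancel_right]

end Matrix

section DiagonalPlusNonneg

variable {ι : Type*} [Fintype ι] [DecidableEq ι] {d : ι → ℝ} {N : Matrix ι ι ℝ}

theorem neg_inv_diagonal_eq (hd : ∀ i, d i ≠ 0) :
    -(diagonal d)⁻¹ = diagonal fun i => (-d i)⁻¹ := by
  rw [inv_eq_right_inv (B := diagonal d⁻¹) (by simp [fun i => mul_inv_cancel₀ (hd i)])]
  ext i j
  rcases eq_or_ne i j with rfl | hij
  · simp [inv_neg]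
  · simp [hij]

theorem nonneg_neg_inv_diagonal_mul (hd : ∀ i, d i < 0) (hN : ∀ i j, 0 ≤ N i j) (i j : ι) :
    0 ≤ (-(diagonal d)⁻¹ * N) i j := by
  rw [neg_inv_diagonal_eq fun i => (hd i).ne, diagonal_mul]
  exact mul_nonneg (inv_nonneg.mpr (neg_nonneg.mpr (hd i).le)) (hN i j)

theorem neg_inv_diagonal_mul_mulVec_apply (hd : ∀ i, d i ≠ 0) (x : ι → ℝ) (i : ι) :
    ((-(diagonal d)⁻¹ * N) *ᵥ x) i = (-d i)⁻¹ * (N *ᵥ x) i := by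
  rw [neg_inv_diagonal_eq hd, ← mulVec_mulVec, mulVec_diagonal]

theorem spectralRadius'_lt_one_of_spectralAbscissa_neg [Nonempty ι] (hd : ∀ i, d i < 0)
    (hN : ∀ i j, 0 ≤ N i j) (hNirr : IsIrreducibleMatrix N)
    (h : spectralAbscissa (diagonal d + N) < 0) : spectralRadius' (-(diagonal d)⁻¹ * N) < 1 := by
  obtain ⟨s, y, hy, hMy⟩ := exists_pos_eigenvector_of_offDiag_nonneg
    (M := diagonal d + N) (fun i j hij => by simpa [hij] using hN i j)
    (hNirr.of_offDiag_eq fun i j hij => by simp [hij])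
  have hs : s < 0 := by
    have := re_le_spectralAbscissa (ofReal_mem_spectrum_map_of_mulVec_eq_smul
      (fun h0 => (hy _).ne' (congrFun h0 (Classical.arbitrary ι))) hMy)
    rw [Complex.ofReal_re] at this
    exact this.trans_lt h
  refine spectralRadius'_lt_of_mulVec_lt (nonneg_neg_inv_diagonal_mul hd hN) hy fun i => ?_
  have hNy : (N *ᵥ y) i = (s - d i) * y i := by
    have := congrFun hMy i
    rw [add_mulVec, Pi.add_apply, mulVec_diagonal, Pi.smul_apply, smul_eq_mul] at this
    linarith
  rw [neg_inv_diagonal_mul_mulVec_apply fun i => (hd i).ne, hNy, one_mul,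
    inv_mul_lt_iff₀ (neg_pos.mpr (hd i))]
  nlinarith [hy i]

theorem spectralAbscissa_neg_of_spectralRadius'_lt_one [Nonempty ι] (hd : ∀ i, d i < 0)
    (hN : ∀ i j, 0 ≤ N i j) (h : spectralRadius' (-(diagonal d)⁻¹ * N) < 1) :
    spectralAbscissa (diagonal d + N) < 0 := by
  obtain ⟨μ, hμ, hμσ⟩ := exists_re_eq_spectralAbscissa (diagonal d + N)
  rw [← hμσ]
  by_contra! hre
  obtain ⟨v, hv0, hv⟩ := mem_spectrum_iff_exists_mulVec_eq_smul.mp hμ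
  set x : ι → ℝ := fun j => ‖v j‖
  have hsub : (1 : ℝ) • x ≤ (-(diagonal d)⁻¹ * N) *ᵥ x := fun i => by
    have hNv : (N.map Complex.ofReal *ᵥ v) i = (μ - d i) * v i := by
      have := congrFun hv i
      rw [Matrix.map_add _ Complex.ofReal_add, diagonal_map Complex.ofReal_zero, add_mulVec,
        Pi.add_apply, mulVec_diagonal, Pi.smul_apply, smul_eq_mul] at this
      linear_combination this
    have hdx : -d i * x i ≤ (N *ᵥ x) i := calc
      -d i * x i ≤ ‖μ - d i‖ * x i := by
        refine mul_le_mul_of_nonneg_right ?_ (norm_nonneg _)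
        linarith [Complex.re_le_norm (μ - d i), Complex.sub_re μ (d i), Complex.ofReal_re (d i)]
      _ = ‖(N.map Complex.ofReal *ᵥ v) i‖ := by rw [hNv, norm_mul]
      _ ≤ (N *ᵥ x) i := norm_map_ofReal_mulVec_le hN v i
    rw [neg_inv_diagonal_mul_mulVec_apply fun i => (hd i).ne, one_smul,
      le_inv_mul_iff₀ (neg_pos.mpr (hd i))]
    exact hdx
  exact h.not_ge (le_spectralRadius'_of_smul_le_mulVec (nonneg_neg_inv_diagonal_mul hd hN)
    zero_le_one (fun j => norm_nonneg _)
    (fun h0 => hv0 (funext fun j => norm_eq_zero.mp (congrFun h0 j))) hsub)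

end DiagonalPlusNonneg

/-- For `M = Λ + N` with `Λ` negative diagonal and `N` irreducible nonnegative:
`σ(M) < 0` iff `ρ(-Λ⁻¹N) < 1`. -/
theorem spectralAbscissa_neg_iff_spectralRadius_lt_one
    (n : ℕ) (hn : 0 < n) (lam : Fin n → ℝ) (hlam : ∀ i, lam i < 0)
    (N : Matrix (Fin n) (Fin n) ℝ) (hN : ∀ i j, 0 ≤ N i j)
    (hNirr : IsIrreducibleMatrix N) :
    spectralAbscissa (Matrix.diagonal lam + N) < 0
      ↔ spectralRadius' (-(Matrix.diagonal lam)⁻¹ * N) < 1 := by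
  have : Nonempty (Fin n) := ⟨⟨0, hn⟩⟩
  exact ⟨spectralRadius'_lt_one_of_spectralAbscissa_neg hlam hN hNirr,
    spectralAbscissa_neg_of_spectralRadius'_lt_one hlam hN⟩
end

section
/- Suppose for each k = 1,…,m the matrix f_k(x,u) defines an SIS subsystem dissipative with storage V_k(x_k) = (1/2)‖x_k‖² and supply rate S_k(u_k,y_k) = y_kᵀC_k u_k + y_kᵀ(-Γ_k+B_k)y_k, and the interconnection is u = My with y = x and M binary. If there exist α_k > 0 such that the matrix [Mᵀ Iᵀ] Ψ [M; I] is negative definite, where Ψ has zero upper-left block, off-diagonal blocks diag{(α_k/2)C_kᵀ} and lower-right block diag{α_k(-Γ_k+B_k)}, then V(x) = Σ α_k V_k(x_k) is a strict Lyapunov function for the composite dynamics on [0,1]ⁿ \ {0}: its derivative along trajectories is strictly negative for all nonzero x ∈ [0,1]ⁿ. -/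
open Matrix

private lemma bd_smul_right {m : ℕ} {nk pk : Fin m → ℕ} (c : Fin m → ℝ)
    (N : ∀ k, Matrix (Fin (nk k)) (Fin (pk k)) ℝ)
    (i : Σ k, Fin (nk k)) (j : Σ k, Fin (pk k)) :
    blockDiagonal' (fun k => c k • N k) i j = c j.1 * blockDiagonal' N i j := by
  obtain ⟨k, i⟩ := i; obtain ⟨k', j⟩ := j
  by_cases h : k = k'
  · subst h; simp
  · rw [blockDiagonal'_apply_ne _ _ _ h, blockDiagonal'_apply_ne _ _ _ h, mul_zero]

private lemma bd_smul_left {m : ℕ} {nk pk : Fin m → ℕ} (c : Fin m → ℝ)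
    (N : ∀ k, Matrix (Fin (nk k)) (Fin (pk k)) ℝ)
    (i : Σ k, Fin (nk k)) (j : Σ k, Fin (pk k)) :
    blockDiagonal' (fun k => c k • N k) i j = c i.1 * blockDiagonal' N i j := by
  obtain ⟨k, i⟩ := i; obtain ⟨k', j⟩ := j
  by_cases h : k = k'
  · subst h; simp
  · rw [blockDiagonal'_apply_ne _ _ _ h, blockDiagonal'_apply_ne _ _ _ h, mul_zero]

private lemma bd_nonneg {m : ℕ} {nk pk : Fin m → ℕ}
    (N : ∀ k, Matrix (Fin (nk k)) (Fin (pk k)) ℝ) (hN : ∀ k i j, 0 ≤ N k i j)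
    (i : Σ k, Fin (nk k)) (j : Σ k, Fin (pk k)) :
    0 ≤ blockDiagonal' N i j := by
  obtain ⟨k, i⟩ := i; obtain ⟨k', j⟩ := j
  by_cases h : k = k'
  · subst h; simpa using hN k i j
  · rw [blockDiagonal'_apply_ne _ _ _ h]

/-- Composite Lyapunov function from dissipative SIS subsystems: if the LMI
`[Mᵀ Iᵀ] Ψ [M; I] < 0` holds for some weights `α_k > 0`, then
`V(x) = Σ_k α_k (1/2)‖x_k‖²` is a strict Lyapunov function for the composite
network SIS dynamics on `[0,1]ⁿ \ {0}`. -/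
theorem composite_sis_strict_lyapunov
    (m : ℕ) (nk pk : Fin m → ℕ)
    (B : ∀ k, Matrix (Fin (nk k)) (Fin (nk k)) ℝ) (hB : ∀ k i j, 0 ≤ B k i j)
    (g : ∀ k, Fin (nk k) → ℝ) (hg : ∀ k i, 0 ≤ g k i)
    (C : ∀ k, Matrix (Fin (nk k)) (Fin (pk k)) ℝ) (hC : ∀ k i j, 0 ≤ C k i j)
    (M : Matrix (Σ k, Fin (pk k)) (Σ k, Fin (nk k)) ℝ)
    (hMbin : ∀ i j, M i j = 0 ∨ M i j = 1)
    -- each subsystem is dissipative with the quadratic storage and supply rate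
    (hdiss : ∀ k, ∀ xk : Fin (nk k) → ℝ, ∀ uk : Fin (pk k) → ℝ,
      (∀ i, xk i ∈ Set.Icc (0:ℝ) 1) → (∀ j, uk j ∈ Set.Icc (0:ℝ) 1) →
      xk ⬝ᵥ ((-(Matrix.diagonal (g k)) + B k - Matrix.diagonal xk * B k).mulVec xk
          + (C k - Matrix.diagonal xk * C k).mulVec uk)
        ≤ xk ⬝ᵥ (C k).mulVec uk
            + xk ⬝ᵥ (-(Matrix.diagonal (g k)) + B k).mulVec xk)
    (α : Fin m → ℝ) (hα : ∀ k, 0 < α k)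
    -- the LMI: [Mᵀ Iᵀ] Ψ [M; I] is negative definite
    (hLMI : ∀ x : (Σ k, Fin (nk k)) → ℝ, x ≠ 0 →
      x ⬝ᵥ (Mᵀ * Matrix.blockDiagonal' (fun k => (α k / 2) • (C k)ᵀ)
            + (Matrix.blockDiagonal' (fun k => (α k / 2) • (C k)ᵀ))ᵀ * M
            + Matrix.blockDiagonal'
                (fun k => α k • (B k - Matrix.diagonal (g k)))).mulVec x < 0) :
    ∀ x : (Σ k, Fin (nk k)) → ℝ, (∀ i, x i ∈ Set.Icc (0:ℝ) 1) → x ≠ 0 →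
      (fun i => α i.1 * x i) ⬝ᵥ
        ((-(Matrix.blockDiagonal' (fun k => Matrix.diagonal (g k)))
            + Matrix.blockDiagonal' B
            - Matrix.diagonal x * Matrix.blockDiagonal' B).mulVec x
          + (Matrix.blockDiagonal' C
              - Matrix.diagonal x * Matrix.blockDiagonal' C).mulVec (M.mulVec x))
        < 0 := by
  intro x hx hne
  set u : (Σ k, Fin (pk k)) → ℝ := M.mulVec x with hu
  set Bb := Matrix.blockDiagonal' B with hBb
  set Cb := Matrix.blockDiagonal' C with hCb
  set Γb := Matrix.blockDiagonal' (fun k => Matrix.diagonal (g k)) with hΓb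
  set D := Matrix.blockDiagonal' (fun k => (α k / 2) • (C k)ᵀ) with hD
  have hx0 : ∀ i, 0 ≤ x i := fun i => (hx i).1
  have hM0 : ∀ i j, 0 ≤ M i j := by
    intro i j; rcases hMbin i j with h | h <;> rw [h] <;> norm_num
  have hu0 : ∀ l, 0 ≤ u l := by
    intro l
    exact Finset.sum_nonneg fun j _ => mul_nonneg (hM0 l j) (hx0 j)
  have hBb0 := bd_nonneg B hB
  have hCb0 := bd_nonneg C hC
  have hBx0 : ∀ i, 0 ≤ Bb.mulVec x i := fun i =>
    Finset.sum_nonneg fun j _ => mul_nonneg (hBb0 i j) (hx0 j)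
  have hCu0 : ∀ i, 0 ≤ Cb.mulVec u i := fun i =>
    Finset.sum_nonneg fun j _ => mul_nonneg (hCb0 i j) (hu0 j)
  -- pointwise entry of D
  have hDpt : ∀ (l : Σ k, Fin (pk k)) (j : Σ k, Fin (nk k)),
      D l j = (α j.1 / 2) * Cb j l := by
    intro l j
    rw [hD, bd_smul_right (fun k => α k / 2) (fun k => (C k)ᵀ) l j]
    congr 1
    obtain ⟨k, l⟩ := l; obtain ⟨k', j⟩ := j
    by_cases h : k = k'
    · subst h; simp [hCb]
    · rw [blockDiagonal'_apply_ne _ _ _ h, hCb,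
        blockDiagonal'_apply_ne _ _ _ (Ne.symm h)]
  have hGpt : ∀ (i j : Σ k, Fin (nk k)),
      Matrix.blockDiagonal' (fun k => α k • (B k - Matrix.diagonal (g k))) i j
        = α i.1 * (Bb i j - Γb i j) := by
    intro i j
    rw [bd_smul_left α (fun k => B k - Matrix.diagonal (g k)) i j]
    congr 1
    obtain ⟨k, i⟩ := i; obtain ⟨k', j⟩ := j
    by_cases h : k = k'
    · subst h
      simp only [hBb, hΓb, Matrix.sub_apply, blockDiagonal'_apply_eq]
    · rw [blockDiagonal'_apply_ne _ _ _ h, hBb, hΓb,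
        blockDiagonal'_apply_ne _ _ _ h, blockDiagonal'_apply_ne _ _ _ h, sub_zero]
  -- the quadratic form
  have hAx := hLMI x hne
  -- cross term
  have tD : u ⬝ᵥ D.mulVec x = ∑ j, (α j.1 / 2) * x j * Cb.mulVec u j := by
    show ∑ l, u l * (∑ j, D l j * x j) = _
    simp only [hDpt]
    simp_rw [Finset.mul_sum]
    rw [Finset.sum_comm]
    refine Finset.sum_congr rfl fun j _ => ?_
    show ∑ l, u l * (α j.1 / 2 * Cb j l * x j) = α j.1 / 2 * x j * ∑ l, Cb j l * u l
    rw [Finset.mul_sum]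
    exact Finset.sum_congr rfl fun l _ => by ring
  have t1 : x ⬝ᵥ (Mᵀ * D).mulVec x = u ⬝ᵥ D.mulVec x := by
    rw [← mulVec_mulVec, dotProduct_mulVec, vecMul_transpose]
  have t2 : x ⬝ᵥ (Dᵀ * M).mulVec x = u ⬝ᵥ D.mulVec x := by
    rw [← mulVec_mulVec, dotProduct_mulVec, vecMul_transpose, dotProduct_comm]
  have t3 : x ⬝ᵥ (Matrix.blockDiagonal'
      (fun k => α k • (B k - Matrix.diagonal (g k)))).mulVec x
      = ∑ i, α i.1 * x i * (Bb.mulVec x i - Γb.mulVec x i) := by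
    show ∑ i, x i * (∑ j, _ * x j) = _
    refine Finset.sum_congr rfl fun i _ => ?_
    simp only [hGpt]
    show x i * ∑ j, α i.1 * (Bb i j - Γb i j) * x j
        = α i.1 * x i * ((∑ j, Bb i j * x j) - ∑ j, Γb i j * x j)
    rw [← Finset.sum_sub_distrib, Finset.mul_sum, Finset.mul_sum]
    exact Finset.sum_congr rfl fun j _ => by ring
  have hquad : x ⬝ᵥ (Mᵀ * D + Dᵀ * M + Matrix.blockDiagonal'
      (fun k => α k • (B k - Matrix.diagonal (g k)))).mulVec x
      = ∑ i, α i.1 * x i * (Cb.mulVec u i + (Bb.mulVec x i - Γb.mulVec x i)) := by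
    rw [add_mulVec, add_mulVec, dotProduct_add, dotProduct_add, t1, t2, t3, tD]
    rw [← Finset.sum_add_distrib, ← Finset.sum_add_distrib]
    exact Finset.sum_congr rfl fun i _ => by ring
  rw [hquad] at hAx
  -- rewrite the goal
  have hgoal : (fun i => α i.1 * x i) ⬝ᵥ
      ((-Γb + Bb - Matrix.diagonal x * Bb).mulVec x
        + (Cb - Matrix.diagonal x * Cb).mulVec u)
      = (∑ i, α i.1 * x i * (Cb.mulVec u i + (Bb.mulVec x i - Γb.mulVec x i)))
        - ∑ i, α i.1 * (x i * x i) * (Bb.mulVec x i + Cb.mulVec u i) := by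
    rw [← Finset.sum_sub_distrib]
    refine Finset.sum_congr rfl fun i _ => ?_
    have e1 : (Matrix.diagonal x * Bb).mulVec x i = x i * Bb.mulVec x i := by
      rw [← mulVec_mulVec, mulVec_diagonal]
    have e2 : (Matrix.diagonal x * Cb).mulVec u i = x i * Cb.mulVec u i := by
      rw [← mulVec_mulVec, mulVec_diagonal]
    simp only [Pi.add_apply, sub_mulVec, add_mulVec, neg_mulVec, Pi.sub_apply,
      Pi.neg_apply, e1, e2]
    ring
  rw [hgoal]
  have hE : 0 ≤ ∑ i, α i.1 * (x i * x i) * (Bb.mulVec x i + Cb.mulVec u i) :=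
    Finset.sum_nonneg fun i _ => mul_nonneg
      (mul_nonneg (hα i.1).le (mul_nonneg (hx0 i) (hx0 i)))
      (add_nonneg (hBx0 i) (hCu0 i))
  linarith
end
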